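/- For every positive integer k, the k-colour list Ramsey number of the triangle satisfies R_ℓ(K_3, k) > e^{√k/4}. -/

import Mathlib

/-- A colouring `c` of the edges of the complete graph on `Fin n` contains a
monochromatic copy of the graph `G`. -/
def HasMonoCopy {α β : Type*} (G : SimpleGraph α) {n : ℕ} (c : Sym2 (Fin n) → β) : Prop :=
  ∃ (f : α → Fin n) (x : β), Function.Injective f ∧
    ∀ a b, G.Adj a b → c s(f a, f b) = x

/-- The `k`-colour list Ramsey number of a graph `G`: the least `n` for which one can
assign a list of `k` colours to each edge of `K_n` so that every colouring of the edges
from these lists contains a monochromatic copy of `G`. -/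
noncomputable def listRamsey {α : Type*} (G : SimpleGraph α) (k : ℕ) : ℕ :=
  sInf { n : ℕ | ∃ L : Sym2 (Fin n) → Finset ℕ,
    (∀ e : Sym2 (Fin n), ¬ e.IsDiag → (L e).card = k) ∧
    ∀ c : Sym2 (Fin n) → ℕ, (∀ e : Sym2 (Fin n), ¬ e.IsDiag → c e ∈ L e) →
      HasMonoCopy G c }

/-!
Suppose `K_n` carries `k`-lists forcing a monochromatic triangle, with `n ≤ exp (√k / 4)`, and let
`t = ⌈√k⌉`. Since `n ≤ 2 ^ t`, colouring `uv` by the highest bit in which `u` and `v` differ is a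
`t`-colouring `g` of `K_n` without monochromatic triangle (three numbers cannot pairwise differ in
one bit). For a uniformly random map `σ` from colours to `[t]`, an edge `e` has no colour `a ∈ L e`
with `σ a = g e` with probability `(1 - 1/t)^k ≤ exp (-k/t)`, and `n² exp (-k/t) < 1`; so some `σ`
admits a list colouring `c` with `σ ∘ c = g`. A monochromatic triangle of `c` would be one of `g`.
The minimum defining `listRamsey` exists by the `k`-colour Ramsey theorem for triangles.
-/

open Finset Real

def HasMonoTriangle {V β : Type*} (c : Sym2 V → β) : Prop :=
  ∃ u v w, u ≠ v ∧ u ≠ w ∧ v ≠ w ∧ c s(u, v) = c s(u, w) ∧ c s(u, v) = c s(v, w)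

namespace HasMonoTriangle

variable {V W β γ : Type*} {c : Sym2 V → β}

theorem of_comp_map {f : W → V} (hf : f.Injective) (h : HasMonoTriangle (c ∘ Sym2.map f)) :
    HasMonoTriangle c := by
  obtain ⟨u, v, w, huv, huw, hvw, h₁, h₂⟩ := h
  exact ⟨f u, f v, f w, hf.ne huv, hf.ne huw, hf.ne hvw, h₁, h₂⟩

theorem of_comp_eq {g : Sym2 V → γ} (σ : β → γ)
    (hσ : ∀ u v, u ≠ v → σ (c s(u, v)) = g s(u, v)) (h : HasMonoTriangle c) :
    HasMonoTriangle g := by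
  obtain ⟨u, v, w, huv, huw, hvw, h₁, h₂⟩ := h
  refine ⟨u, v, w, huv, huw, hvw, ?_, ?_⟩
  · rw [← hσ u v huv, ← hσ u w huw, h₁]
  · rw [← hσ u v huv, ← hσ v w hvw, h₂]

end HasMonoTriangle

theorem hasMonoCopy_top_fin_three_iff {β : Type*} {n : ℕ} (c : Sym2 (Fin n) → β) :
    HasMonoCopy (⊤ : SimpleGraph (Fin 3)) c ↔ HasMonoTriangle c := by
  constructor
  · rintro ⟨f, x, hf, hc⟩
    refine ⟨f 0, f 1, f 2, hf.ne (by decide), hf.ne (by decide), hf.ne (by decide), ?_, ?_⟩ <;>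
      simp [hc, SimpleGraph.top_adj]
  · rintro ⟨u, v, w, huv, huw, hvw, h₁, h₂⟩
    refine ⟨![u, v, w], c s(u, v), ?_, ?_⟩
    · intro a b hab
      fin_cases a <;> fin_cases b <;> simp_all
    · intro a b hab
      fin_cases a <;> fin_cases b <;> simp_all [Sym2.eq_swap]

def highestDifferingBit : Sym2 ℕ → ℕ :=
  Sym2.lift ⟨fun a b => (a ^^^ b).log2, fun a b => congrArg Nat.log2 (Nat.xor_comm a b)⟩

theorem highestDifferingBit_lt {a b t : ℕ} (hab : a ≠ b) (ha : a < 2 ^ t) (hb : b < 2 ^ t) :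
    highestDifferingBit s(a, b) < t :=
  (Nat.log2_lt (xor_eq_zero_iff.not.mpr hab)).mpr (Nat.xor_lt_two_pow ha hb)

theorem testBit_highestDifferingBit_ne {a b : ℕ} (hab : a ≠ b) :
    a.testBit (highestDifferingBit s(a, b)) ≠ b.testBit (highestDifferingBit s(a, b)) := by
  have := Nat.testBit_log2 (xor_eq_zero_iff.not.mpr hab)
  rw [Nat.testBit_xor] at this
  simpa [highestDifferingBit] using this

theorem not_hasMonoTriangle_highestDifferingBit : ¬HasMonoTriangle highestDifferingBit := by
  rintro ⟨u, v, w, huv, huw, hvw, h₁, h₂⟩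
  have buv := testBit_highestDifferingBit_ne huv
  have buw := testBit_highestDifferingBit_ne huw
  have bvw := testBit_highestDifferingBit_ne hvw
  rw [← h₁] at buw
  rw [← h₂] at bvw
  grind

def triangleRamseyBound : ℕ → ℕ
  | 0 => 2
  | k + 1 => (k + 1) * triangleRamseyBound k + 2

theorem hasMonoTriangle_of_card_le {V β : Type*} [Fintype V] [DecidableEq V] [DecidableEq β]
    (k : ℕ) (c : Sym2 V → β) (C : Finset β) (hC : #C ≤ k)
    (hc : ∀ u v, u ≠ v → c s(u, v) ∈ C) (hV : triangleRamseyBound k ≤ Fintype.card V) :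
    HasMonoTriangle c := by
  induction k generalizing V C with
  | zero =>
    obtain ⟨u, v, huv⟩ := Fintype.exists_pair_of_one_lt_card hV
    simpa [Finset.card_eq_zero.mp (Nat.le_zero.mp hC)] using hc u v huv
  | succ k ih =>
    simp only [triangleRamseyBound] at hV
    obtain ⟨v₀⟩ : Nonempty V := Fintype.card_pos_iff.mp (by omega)
    have hmaps : ∀ u ∈ univ.erase v₀, c s(v₀, u) ∈ C :=
      fun u hu => hc _ _ (ne_of_mem_erase hu).symm
    obtain ⟨i, hiC, hB⟩ := exists_lt_card_fiber_of_mul_lt_card_of_maps_to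
      (n := triangleRamseyBound k) hmaps <| by
        rw [card_erase_of_mem (mem_univ _), card_univ]
        calc #C * _ ≤ (k + 1) * triangleRamseyBound k := Nat.mul_le_mul_right _ hC
          _ < _ := by omega
    set B := (univ.erase v₀).filter fun u => c s(v₀, u) = i
    by_cases hcolour_i : ∃ u ∈ B, ∃ w ∈ B, u ≠ w ∧ c s(u, w) = i
    · obtain ⟨u, hu, w, hw, huw, hcuw⟩ := hcolour_i
      simp only [B, mem_filter, mem_erase] at hu hw
      exact ⟨v₀, u, w, hu.1.1.symm, hw.1.1.symm, huw, by rw [hu.2, hw.2], by rw [hu.2, hcuw]⟩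
    push Not at hcolour_i
    refine HasMonoTriangle.of_comp_map Subtype.val_injective (ih (c ∘ Sym2.map ((↑) : B → V))
      (C.erase i) ?_ ?_ ?_)
    · rw [card_erase_of_mem hiC]; omega
    · intro u v huv
      have huv' := Subtype.val_injective.ne huv
      exact mem_erase.mpr ⟨hcolour_i u u.2 v v.2 huv', hc _ _ huv'⟩
    · exact (Fintype.card_coe B).symm ▸ hB.le

section Hitting

variable {ι α : Type*} [DecidableEq α]

theorem card_pi_ite_erase_range {S L : Finset α} (hLS : L ⊆ S) {t x : ℕ} (hx : x < t) :
    #(S.pi fun a => if a ∈ L then (range t).erase x else range t) =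
      (t - 1) ^ #L * t ^ (#S - #L) := by
  have hfilter : S.filter (· ∈ L) = L := by
    rw [filter_mem_eq_inter, inter_eq_right.mpr hLS]
  rw [card_pi]
  simp only [apply_ite card, card_erase_of_mem (mem_range.mpr hx), card_range]
  rw [prod_ite, prod_const, prod_const, hfilter, filter_not, hfilter, card_sdiff_of_subset hLS]

theorem exists_forall_exists_mem_eq_of_card_mul_lt (E : Finset ι) (L : ι → Finset α)
    (g : ι → ℕ) {k t : ℕ} (hL : ∀ i ∈ E, #(L i) = k) (hg : ∀ i ∈ E, g i < t)
    (h : #E * (t - 1) ^ k < t ^ k) :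
    ∃ σ : α → ℕ, ∀ i ∈ E, ∃ a ∈ L i, σ a = g i := by
  obtain rfl | ⟨i₀, hi₀⟩ := E.eq_empty_or_nonempty
  · exact ⟨0, by simp⟩
  set S := E.biUnion L
  have hLS : ∀ i ∈ E, L i ⊆ S := fun i hi => subset_biUnion_of_mem L hi
  have hkS : k ≤ #S := hL i₀ hi₀ ▸ card_le_card (hLS i₀ hi₀)
  set missed := fun i => S.pi fun a => if a ∈ L i then (range t).erase (g i) else range t
  have hcard : #(E.biUnion missed) < #(S.pi fun _ => range t) := calc
    _ ≤ ∑ i ∈ E, #(missed i) := card_biUnion_le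
    _ = ∑ i ∈ E, (t - 1) ^ k * t ^ (#S - k) := sum_congr rfl fun i hi => by
      rw [card_pi_ite_erase_range (hLS i hi) (hg i hi), hL i hi]
    _ = #E * (t - 1) ^ k * t ^ (#S - k) := by rw [sum_const, smul_eq_mul, mul_assoc]
    _ < t ^ k * t ^ (#S - k) :=
      Nat.mul_lt_mul_of_pos_right h (pow_pos (Nat.zero_lt_of_lt (hg i₀ hi₀)) _)
    _ = _ := by rw [← pow_add, Nat.add_sub_cancel' hkS, card_pi, prod_const, card_range]
  obtain ⟨σ, hσ, hσ_hits⟩ := exists_mem_notMem_of_card_lt_card hcard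
  refine ⟨fun a => if ha : a ∈ S then σ a ha else 0, fun i hi => ?_⟩
  by_contra! hmiss
  refine hσ_hits (mem_biUnion.mpr ⟨i, hi, mem_pi.mpr fun a ha => ?_⟩)
  have hσa := mem_pi.mp hσ a ha
  split_ifs with haL
  · exact mem_erase.mpr ⟨by simpa [ha] using hmiss a haL, hσa⟩
  · exact hσa

end Hitting

theorem exp_div_four_le_two_pow {x : ℝ} {t : ℕ} (hx : x ≤ t) : exp (x / 4) ≤ 2 ^ t := calc
  exp (x / 4) ≤ exp (t * log 2) := by
    have := log_two_gt_d9
    have ht : (0 : ℝ) ≤ t := t.cast_nonneg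
    gcongr
    nlinarith
  _ = 2 ^ t := by rw [exp_nat_mul, exp_log two_pos]

theorem one_sub_inv_pow_le_exp_neg {t : ℝ} (ht : 1 ≤ t) (k : ℕ) :
    (1 - t⁻¹) ^ k ≤ exp (-(k / t)) := calc
  (1 - t⁻¹) ^ k ≤ exp (-t⁻¹) ^ k :=
    pow_le_pow_left₀ (sub_nonneg.mpr (inv_le_one_of_one_le₀ ht)) (one_sub_le_exp_neg _) k
  _ = exp (-(k / t)) := by rw [← exp_nat_mul]; ring_nf

theorem sq_mul_ceil_sqrt_sub_one_pow_lt {k n : ℕ} (hk : 0 < k)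
    (hn : (n : ℝ) ≤ exp (√k / 4)) :
    n ^ 2 * (⌈√k⌉₊ - 1) ^ k < ⌈√k⌉₊ ^ k := by
  set s := √(k : ℝ)
  set t := ⌈s⌉₊
  have hs1 : 1 ≤ s := one_le_sqrt.mpr (by exact_mod_cast hk)
  have hsq : s ^ 2 = k := sq_sqrt k.cast_nonneg
  have hst : s ≤ t := Nat.le_ceil s
  have hts : (t : ℝ) < s + 1 := Nat.ceil_lt_add_one (by linarith)
  have ht1R : (1 : ℝ) ≤ t := hs1.trans hst
  have ht0 : (0 : ℝ) < t := by linarith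
  -- `s t < s (s + 1) = k + s ≤ 2 k`
  have hexponent : s / 2 < k / t := by
    rw [div_lt_div_iff₀ two_pos ht0]
    nlinarith
  have hn2 : (n : ℝ) ^ 2 ≤ exp (s / 2) := calc
    (n : ℝ) ^ 2 ≤ exp (s / 4) ^ 2 := by gcongr
    _ = exp (s / 2) := by rw [← exp_nat_mul]; ring_nf
  have hreal : (n : ℝ) ^ 2 * ((t : ℝ) - 1) ^ k < (t : ℝ) ^ k := calc
    (n : ℝ) ^ 2 * ((t : ℝ) - 1) ^ k = n ^ 2 * (1 - (t : ℝ)⁻¹) ^ k * (t : ℝ) ^ k := by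
      rw [mul_assoc, ← mul_pow, sub_mul, inv_mul_cancel₀ ht0.ne', one_mul]
    _ ≤ exp (s / 2) * exp (-(k / t)) * (t : ℝ) ^ k := by
      have hpos : (0 : ℝ) ≤ 1 - (t : ℝ)⁻¹ := sub_nonneg.mpr (inv_le_one_of_one_le₀ ht1R)
      refine mul_le_mul_of_nonneg_right (mul_le_mul hn2 ?_ (pow_nonneg hpos k) (exp_pos _).le)
        (by positivity)
      exact one_sub_inv_pow_le_exp_neg ht1R k
    _ < 1 * (t : ℝ) ^ k := by
      rw [← exp_add, ← exp_zero]
      gcongr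
      linarith
    _ = (t : ℝ) ^ k := one_mul _
  rw [← Nat.cast_lt (α := ℝ)]
  push_cast [Nat.one_le_cast.mp ht1R]
  exact hreal

/-- `listRamsey G k` is by definition `sInf {n | ListArrows G k n}`, which is the junk value `0`
unless some `n` works. -/
def ListArrows {α : Type*} (G : SimpleGraph α) (k n : ℕ) : Prop :=
  ∃ L : Sym2 (Fin n) → Finset ℕ, (∀ e : Sym2 (Fin n), ¬ e.IsDiag → #(L e) = k) ∧
    ∀ c : Sym2 (Fin n) → ℕ, (∀ e : Sym2 (Fin n), ¬ e.IsDiag → c e ∈ L e) →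
      HasMonoCopy G c

theorem ListArrows.listRamsey {α : Type*} {G : SimpleGraph α} {k n : ℕ} (h : ListArrows G k n) :
    ListArrows G k (listRamsey G k) :=
  Nat.sInf_mem (s := {n | ListArrows G k n}) ⟨n, h⟩

theorem listArrows_triangleRamseyBound (k : ℕ) :
    ListArrows (⊤ : SimpleGraph (Fin 3)) k (triangleRamseyBound k) := by
  refine ⟨fun _ => range k, fun _ _ => card_range k, fun c hc => ?_⟩
  refine (hasMonoCopy_top_fin_three_iff c).mpr <|
    hasMonoTriangle_of_card_le k c (range k) (card_range k).le (fun u v huv => ?_) (by simp)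
  exact hc _ (Sym2.mk_isDiag_iff.not.mpr huv)

theorem exp_sqrt_div_four_lt_of_listArrows {k n : ℕ} (hk : 0 < k)
    (h : ListArrows (⊤ : SimpleGraph (Fin 3)) k n) : exp (√k / 4) < n := by
  obtain ⟨L, hL, hforce⟩ := h
  by_contra! hn
  set t := ⌈√(k : ℝ)⌉₊
  have hn_le : n ≤ 2 ^ t := by exact_mod_cast hn.trans (exp_div_four_le_two_pow (Nat.le_ceil _))
  set g : Sym2 (Fin n) → ℕ := highestDifferingBit ∘ Sym2.map Fin.val
  set E := univ.filter fun e : Sym2 (Fin n) => ¬e.IsDiag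
  have hmem_E : ∀ u v : Fin n, s(u, v) ∈ E ↔ u ≠ v := by simp [E]
  have hg : ∀ e ∈ E, g e < t := by
    intro e he
    induction e using Sym2.ind with
    | _ u v =>
      exact highestDifferingBit_lt (Fin.val_injective.ne ((hmem_E u v).mp he))
        (u.2.trans_le hn_le) (v.2.trans_le hn_le)
  have hE : #E * (t - 1) ^ k < t ^ k := calc
    #E * (t - 1) ^ k ≤ n ^ 2 * (t - 1) ^ k := by
      gcongr
      rw [← Fintype.card_subtype, Sym2.card_subtype_not_diag, Fintype.card_fin]
      exact Nat.choose_le_pow n 2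
    _ < t ^ k := sq_mul_ceil_sqrt_sub_one_pow_lt hk hn
  obtain ⟨σ, hσ⟩ := exists_forall_exists_mem_eq_of_card_mul_lt E L g
    (fun e he => hL e (mem_filter.mp he).2) hg hE
  choose! c hcL hcσ using hσ
  have hc : HasMonoTriangle c := (hasMonoCopy_top_fin_three_iff c).mp <|
    hforce c fun e he => hcL e (mem_filter.mpr ⟨mem_univ _, he⟩)
  have hg_mono : HasMonoTriangle g :=
    hc.of_comp_eq σ fun u v huv => hcσ _ ((hmem_E u v).mpr huv)
  exact not_hasMonoTriangle_highestDifferingBit (hg_mono.of_comp_map Fin.val_injective)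

theorem list_ramsey_triangle_lower (k : ℕ) (hk : 0 < k) :
    Real.exp (Real.sqrt k / 4) < (listRamsey (⊤ : SimpleGraph (Fin 3)) k : ℝ) :=
  exp_sqrt_div_four_lt_of_listArrows hk (listArrows_triangleRamseyBound k).listRamsey
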